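/- arXiv:0806.2936 — 6 statements merged into one kernel-verified Lean document; each statement's English description precedes it below -/
import Mathlib

section
/- For all positive integers n and m, the Fuß-Catalan number (1/(mn+1)) * binomial((m+1)n, n) is a positive integer. -/
/-!
Absorbing a factor gives `n * C((m+1)n, n) = (mn + 1) * C((m+1)n, n-1)`, and `mn + 1` is
coprime to `n`, so `mn + 1` divides `C((m+1)n, n)`.
-/

theorem Nat.mul_add_one_dvd_choose (m n : ℕ) : m * n + 1 ∣ ((m + 1) * n).choose n := by
  rcases n with _ | k
  · simp
  · have hcop : Nat.Coprime (m * (k + 1) + 1) (k + 1) :=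
      (Nat.coprime_mul_right_add_left 1 (k + 1) m).mpr (Nat.coprime_one_left _)
    have hsub : (m + 1) * (k + 1) - k = m * (k + 1) + 1 := by
      rw [add_mul, one_mul]; omega
    have key : ((m + 1) * (k + 1)).choose (k + 1) * (k + 1)
        = ((m + 1) * (k + 1)).choose k * (m * (k + 1) + 1) := by
      rw [Nat.choose_succ_right_eq, hsub]
    exact hcop.dvd_of_dvd_mul_right ⟨_, key.trans (mul_comm _ _)⟩

theorem fussCatalan_pos_integer_general (n m : ℕ) :
    ∃ k : ℕ, 0 < k ∧ (Nat.choose ((m + 1) * n) n : ℚ) / (m * n + 1) = k := by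
  obtain ⟨k, hk⟩ := Nat.mul_add_one_dvd_choose m n
  have hchoose : 0 < ((m + 1) * n).choose n :=
    Nat.choose_pos (Nat.le_mul_of_pos_left n m.succ_pos)
  refine ⟨k, Nat.pos_of_mul_pos_left (hk ▸ hchoose), ?_⟩
  rw [hk, Nat.cast_mul, div_eq_iff (by positivity)]
  push_cast
  ring

/-- For all positive integers `n` and `m`, the Fuß-Catalan number
`(1/(mn+1)) * binomial((m+1)n, n)` is a positive integer. -/
theorem fussCatalan_pos_integer (n m : ℕ) (hn : 0 < n) (hm : 0 < m) :
    ∃ k : ℕ, 0 < k ∧ (Nat.choose ((m + 1) * n) n : ℚ) / (m * n + 1) = k :=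
  fussCatalan_pos_integer_general n m
end

section
/- For every integer n ≥ 2, the identity binomial(2n, n) - binomial(2n-2, n-1) = (∏_{i=1}^{n-1} (2i + 2n - 2)/(2i)) * ((n + 2n - 2)/n) holds as an identity of rational numbers. -/
/-!
With `m = n - 1`, cancelling the factor `2` turns the product into `∏_{i=1}^{m} (m + i) / i`,
and `∏_{i=1}^{k} (a + i) / i = C(a + k, k)` by induction on `k`, so the product is `C(2m, m)`.
The remaining factor `(3m + 1)/(m + 1)` is what the recursion
`(m + 1) C(2m + 2, m + 1) = 2 (2m + 1) C(2m, m)` gives for `C(2m + 2, m + 1) - C(2m, m)`.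
-/

open Finset Nat

theorem prod_Icc_add_div_eq_choose (n k : ℕ) :
    ∏ i ∈ Icc 1 k, ((n + i : ℚ) / i) = (n + k).choose k := by
  induction k with
  | zero => simp
  | succ k ih =>
    have h : ((n + k + 1 : ℕ) : ℚ) * (n + k).choose k
        = (n + k + 1).choose (k + 1) * (k + 1 : ℕ) := by
      exact_mod_cast add_one_mul_choose_eq (n + k) k
    rw [prod_Icc_succ_top (by omega), ih, ← add_assoc]
    field_simp
    push_cast at h ⊢
    linear_combination h

theorem centralBinom_succ_sub_centralBinom (m : ℕ) :
    (centralBinom (m + 1) : ℚ) - centralBinom m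
      = centralBinom m * ((3 * m + 1) / (m + 1)) := by
  have h : ((m + 1 : ℕ) : ℚ) * centralBinom (m + 1) = 2 * (2 * m + 1) * centralBinom m := by
    exact_mod_cast succ_mul_centralBinom_succ m
  push_cast at h
  field_simp
  linear_combination h

theorem typeD_catalan_prod_formula_general (n : ℕ) :
    (Nat.choose (2 * n) n : ℚ) - (Nat.choose (2 * n - 2) (n - 1) : ℚ)
      = (∏ i ∈ Finset.Icc 1 (n - 1), ((2 * (i : ℚ) + 2 * n - 2) / (2 * i)))
          * (((n : ℚ) + 2 * n - 2) / n) := by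
  rcases n with _ | m
  -- truncated subtraction makes the left side `1 - 1`, and the right side divides by `0`
  · simp
  have hprod : ∏ i ∈ Icc 1 m, ((2 * (i : ℚ) + 2 * (m + 1 : ℕ) - 2) / (2 * i))
      = centralBinom m := by
    rw [centralBinom_eq_two_mul_choose, two_mul m, ← prod_Icc_add_div_eq_choose]
    refine prod_congr rfl fun i _ => ?_
    push_cast
    rw [show 2 * (i : ℚ) + 2 * (m + 1) - 2 = 2 * (m + i) by ring,
      mul_div_mul_left _ _ two_ne_zero]
  rw [add_tsub_cancel_right, hprod, show 2 * (m + 1) - 2 = 2 * m by omega,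
    ← centralBinom_eq_two_mul_choose, ← centralBinom_eq_two_mul_choose,
    centralBinom_succ_sub_centralBinom]
  push_cast
  ring

/-- `C(2n,n) - C(2n-2,n-1) = (∏_{i=1}^{n-1} (2i+2n-2)/(2i)) * ((n+2n-2)/n)`
in `ℚ` (type `D_n` Catalan number), for `n ≥ 2`. -/
theorem typeD_catalan_prod_formula (n : ℕ) (hn : 2 ≤ n) :
    (Nat.choose (2 * n) n : ℚ) - (Nat.choose (2 * n - 2) (n - 1) : ℚ)
      = (∏ i ∈ Finset.Icc 1 (n - 1), ((2 * (i : ℚ) + 2 * n - 2) / (2 * i)))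
          * (((n : ℚ) + 2 * n - 2) / n) :=
  typeD_catalan_prod_formula_general n
end

section
/- For every positive integer n and every positive integer m, the number of partitions λ whose Young diagram fits inside the staircase partition ((n-1)m, (n-2)m, ..., 2m, m) equals the Fuß-Catalan number (1/(mn+1)) * binomial((m+1)n, n). -/
/-!
Write `n = p + 1` and `N = (m + 1) n + 1`. Reading the boundary of its diagram, a partition in
the staircase becomes the set of positions `q₀ < ⋯ < q_p` in `[0, N)` of the up-steps of a
lattice path, and it fits the staircase exactly when `q_i ≥ (m + 1)(i + 1)`, i.e. when the
height function that rises by `m` at the chosen positions and falls by `1` elsewhere stays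
strictly below its starting value for `N` steps (the start is *dominant*). For any `n`-subset of
`ℤ/N` this height drops by exactly `1` per period, so by the cycle lemma exactly one of its `N`
rotations is dominant. Hence `N · #partitions = C(N, n)`, and
`C(N, n) = N / (mn + 1) · C((m + 1)n, n)`.
-/

open Finset Fin.NatCast

def IsDominant (f : ℕ → ℤ) (N r : ℕ) : Prop :=
  ∀ k, 0 < k → k ≤ N → f (r + k) < f r

section
variable {f : ℕ → ℤ} {N : ℕ}

theorem exists_isDominant (hN : 0 < N) (hf : ∀ x, f (x + N) = f x - 1) :
    ∃ r < N, IsDominant f N r := by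
  -- `r` is the last point of `[0, N)` at which `f` attains its maximum there.
  obtain ⟨r, hr, hmax⟩ :=
    (range N).exists_max_image (fun x => toLex (f x, x)) ⟨0, mem_range.2 hN⟩
  simp only [mem_range, Prod.Lex.toLex_le_toLex] at hr hmax
  refine ⟨r, hr, fun k hk hkN => ?_⟩
  rcases lt_or_ge (r + k) N with hrk | hrk
  · have := hmax (r + k) hrk
    omega
  · have hperiod := hf (r + k - N)
    have := hmax (r + k - N) (by omega)
    rw [Nat.sub_add_cancel hrk] at hperiod
    omega

theorem IsDominant.eq (hf : ∀ x, f (x + N) = f x - 1) {a b : ℕ} (ha : a < N) (hb : b < N)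
    (hda : IsDominant f N a) (hdb : IsDominant f N b) : a = b := by
  by_contra hne
  wlog hab : a < b generalizing a b
  · exact this hb ha hdb hda (Ne.symm hne) (by omega)
  have h₁ := hda (b - a) (by omega) (by omega)
  have h₂ := hdb (a + N - b) (by omega) (by omega)
  rw [Nat.add_sub_cancel' hab.le] at h₁
  rw [Nat.add_sub_cancel' (by omega), hf] at h₂
  omega

theorem existsUnique_isDominant (hN : 0 < N) (hf : ∀ x, f (x + N) = f x - 1) :
    ∃! r, r < N ∧ IsDominant f N r :=
  let ⟨r, hr, hd⟩ := exists_isDominant hN hf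
  ⟨r, ⟨hr, hd⟩, fun _ ⟨ha, hda⟩ => hda.eq hf ha hr hd⟩

end

def finsetCardEquivOrderEmb (α : Type*) [LinearOrder α] (k : ℕ) :
    {s : Finset α // #s = k} ≃ (Fin k ↪o α) where
  toFun s := s.1.orderEmbOfFin s.2
  invFun e := ⟨univ.map e.toEmbedding, by simp⟩
  left_inv s := Subtype.ext (map_orderEmbOfFin_univ s.1 s.2)
  right_inv e := (orderEmbOfFin_unique' _ fun i => mem_map_of_mem _ (mem_univ i)).symm

theorem forall_mul_card_lt_iff {K c N : ℕ} {e : Fin K → ℕ} (he : Monotone e)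
    (heN : ∀ i, e i < N) :
    (∀ k, 0 < k → k ≤ N → c * #{i | e i < k} < k) ↔ ∀ i, c * (i + 1) ≤ e i := by
  refine ⟨fun h i => ?_, fun h k hk _ => ?_⟩
  · have hsub : Iic i ⊆ ({j | e j < e i + 1} : Finset (Fin K)) := fun j hj =>
      mem_filter.2 ⟨mem_univ j, Nat.lt_succ_of_le (he (mem_Iic.1 hj))⟩
    have := Nat.mul_le_mul_left c (card_le_card hsub)
    have := h (e i + 1) (Nat.succ_pos _) (heN i)
    rw [Fin.card_Iic] at *
    omega
  · obtain hempty | hne := ({i | e i < k} : Finset (Fin K)).eq_empty_or_nonempty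
    · simpa [hempty] using hk
    have hlast := (mem_filter.1 (max'_mem _ hne)).2
    set i := ({i | e i < k} : Finset (Fin K)).max' hne
    have hsub : ({i | e i < k} : Finset (Fin K)) ⊆ Iic i := fun j hj => mem_Iic.2 (le_max' _ j hj)
    have := Nat.mul_le_mul_left c (card_le_card hsub)
    have := h i
    rw [Fin.card_Iic] at *
    omega

theorem StrictMono.add_sub_le {K : ℕ} {f : Fin K → ℕ} (hf : StrictMono f) {i j : Fin K}
    (hij : i ≤ j) : f i + (j - i) ≤ f j := by
  have hsub : (Icc i j).image f ⊆ Icc (f i) (f j) := fun x hx => by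
    obtain ⟨y, hy, rfl⟩ := mem_image.1 hx
    exact mem_Icc.2 ⟨hf.monotone (mem_Icc.1 hy).1, hf.monotone (mem_Icc.1 hy).2⟩
  have := card_le_card hsub
  rw [card_image_of_injective _ hf.injective, Fin.card_Icc, Nat.card_Icc] at this
  omega

namespace FussCatalan

section CycleLemma

variable {N : ℕ} [NeZero N]

def rotate (a : Fin N) (s : Finset (Fin N)) : Finset (Fin N) :=
  s.map (Equiv.subRight a).toEmbedding

@[simp]
theorem mem_rotate {a x : Fin N} {s : Finset (Fin N)} : x ∈ rotate a s ↔ x + a ∈ s := by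
  simp [rotate, mem_map_equiv]

@[simp]
theorem card_rotate (a : Fin N) (s : Finset (Fin N)) : #(rotate a s) = #s := card_map _

@[simp]
theorem rotate_neg_rotate (a : Fin N) (s : Finset (Fin N)) : rotate (-a) (rotate a s) = s := by
  ext; simp

@[simp]
theorem rotate_rotate_neg (a : Fin N) (s : Finset (Fin N)) : rotate a (rotate (-a) s) = s := by
  ext; simp

def periodicCount (s : Finset (Fin N)) (x : ℕ) : ℕ :=
  #{i ∈ range x | ((i : ℕ) : Fin N) ∈ s}

theorem periodicCount_add (s : Finset (Fin N)) (a b : ℕ) :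
    periodicCount s (a + b) = periodicCount s a + periodicCount (rotate a s) b := by
  simp only [periodicCount, card_filter, sum_range_add, mem_rotate, Nat.cast_add, add_comm]

theorem periodicCount_eq_card_filter_val_lt (s : Finset (Fin N)) {x : ℕ} (hx : x ≤ N) :
    periodicCount s x = #{y ∈ s | y.val < x} := by
  refine card_nbij' (fun i => (i : Fin N)) (fun y => y) ?_ ?_ ?_ ?_ <;> intro i hi <;>
    simp only [coe_filter, mem_range, Set.mem_ofPred_eq] at hi ⊢
  · rwa [Fin.val_cast_of_lt (by omega), and_comm]
  · exact ⟨hi.2, by simpa using hi.1⟩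
  · exact Fin.val_cast_of_lt (by omega)
  · exact Fin.cast_val_eq_self _

theorem periodicCount_self (s : Finset (Fin N)) : periodicCount s N = #s := by
  rw [periodicCount_eq_card_filter_val_lt s le_rfl]
  exact congrArg card (filter_true_of_mem fun y _ => y.isLt)

def height (c : ℕ) (s : Finset (Fin N)) (x : ℕ) : ℤ := c * periodicCount s x - x

@[simp]
theorem height_zero (c : ℕ) (s : Finset (Fin N)) : height c s 0 = 0 := by
  simp [height, periodicCount]

theorem height_add (c : ℕ) (s : Finset (Fin N)) (a b : ℕ) :
    height c s (a + b) = height c s a + height c (rotate a s) b := by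
  simp only [height, periodicCount_add]
  push_cast
  ring

theorem height_add_self {c : ℕ} {s : Finset (Fin N)} (hs : c * #s + 1 = N) (x : ℕ) :
    height c s (x + N) = height c s x - 1 := by
  rw [height_add, height, height, periodicCount_self, card_rotate]
  have : (N : ℤ) = c * #s + 1 := by exact_mod_cast hs.symm
  rw [this]
  ring

theorem isDominant_height_rotate_iff (c : ℕ) (s : Finset (Fin N)) (a : Fin N) :
    IsDominant (height c (rotate a s)) N 0 ↔ IsDominant (height c s) N a := by
  have h := height_add c s a
  simp only [Fin.cast_val_eq_self] at h
  simp only [IsDominant, h, zero_add, height_zero, add_lt_iff_neg_left]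

open scoped Classical in
theorem card_filter_isDominant_height {c : ℕ} {s : Finset (Fin N)} (hs : c * #s + 1 = N) :
    #{a : Fin N | IsDominant (height c s) N a} = 1 := by
  obtain ⟨r, ⟨hr, hdom⟩, huniq⟩ :=
    existsUnique_isDominant (NeZero.pos N) (height_add_self hs)
  rw [card_eq_one]
  refine ⟨⟨r, hr⟩, eq_singleton_iff_unique_mem.2 ⟨by simpa using hdom, fun a ha => ?_⟩⟩
  exact Fin.ext (huniq a ⟨a.isLt, (mem_filter.1 ha).2⟩)

open scoped Classical in
theorem card_filter_isDominant_rotate (c K : ℕ) (a : Fin N) :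
    #{s ∈ powersetCard K (univ : Finset (Fin N)) | IsDominant (height c s) N a}
      = #{s ∈ powersetCard K (univ : Finset (Fin N)) | IsDominant (height c s) N 0} := by
  refine card_nbij' (rotate a) (rotate (-a)) ?_ ?_ ?_ ?_ <;> intro s hs
  · simp_all [isDominant_height_rotate_iff]
  · simp_all [← isDominant_height_rotate_iff c (rotate (-a) s) a]
  · exact rotate_neg_rotate a s
  · exact rotate_rotate_neg a s

open scoped Classical in
theorem card_filter_isDominant_mul {c K : ℕ} (hN : c * K + 1 = N) :
    #{s ∈ powersetCard K (univ : Finset (Fin N)) | IsDominant (height c s) N 0} * N =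
      N.choose K := by
  have := card_mul_eq_card_mul (s := powersetCard K univ) (t := (univ : Finset (Fin N)))
    (fun s (a : Fin N) => IsDominant (height c s) N a) (m := 1)
    (fun s hs => card_filter_isDominant_height (by rwa [(mem_powersetCard_univ.1 hs)]))
    (fun a _ => card_filter_isDominant_rotate c K a)
  rw [card_powersetCard, card_univ, Fintype.card_fin, mul_one] at this
  rw [this, mul_comm]

theorem periodicCount_eq_card_orderEmbOfFin_lt {K : ℕ} {s : Finset (Fin N)} (hs : #s = K)
    {x : ℕ} (hx : x ≤ N) : periodicCount s x = #{i | (s.orderEmbOfFin hs i : ℕ) < x} := by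
  rw [periodicCount_eq_card_filter_val_lt s hx]
  conv_lhs => rw [← map_orderEmbOfFin_univ s hs, filter_map, card_map]
  rfl

theorem isDominant_height_iff {c K : ℕ} {s : Finset (Fin N)} (hs : #s = K) :
    IsDominant (height c s) N 0 ↔ ∀ i, c * (i + 1) ≤ (s.orderEmbOfFin hs i : ℕ) := by
  rw [← forall_mul_card_lt_iff (e := fun i => (s.orderEmbOfFin hs i : ℕ))
    (fun _ _ h => (s.orderEmbOfFin hs).monotone h) fun i => (s.orderEmbOfFin hs i).isLt]
  refine forall₃_congr fun k _ hk => ?_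
  rw [zero_add, height_zero, height, periodicCount_eq_card_orderEmbOfFin_lt hs hk, sub_neg]
  exact_mod_cast Iff.rfl

end CycleLemma

section Staircase

variable {m p : ℕ}

def padZero (l : Fin p → ℕ) (i : Fin (p + 1)) : ℕ :=
  if h : (i : ℕ) < p then l ⟨i, h⟩ else 0

@[simp]
theorem padZero_castSucc (l : Fin p → ℕ) (j : Fin p) : padZero l j.castSucc = l j := by
  simp [padZero]

theorem padZero_le {l : Fin p → ℕ} (hl : ∀ j : Fin p, l j ≤ (p - j) * m) (i : Fin (p + 1)) :
    padZero l i ≤ (p - i) * m := by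
  unfold padZero
  split_ifs
  exacts [hl _, Nat.zero_le _]

theorem antitone_padZero {l : Fin p → ℕ} (hl : Antitone l) : Antitone (padZero l) := by
  intro i i' hii'
  unfold padZero
  have : (i : ℕ) ≤ i' := hii'
  split_ifs <;> first | exact hl (Fin.mk_le_mk.2 this) | omega

theorem staircase_add_mul_succ {i : ℕ} (hi : i ≤ p) :
    (p - i) * m + (m + 1) * (i + 1) = m * (p + 1) + 1 + i := by
  obtain ⟨d, rfl⟩ := Nat.exists_eq_add_of_le hi
  rw [Nat.add_sub_cancel_left]
  ring

theorem strictMono_sub_padZero {l : Fin p → ℕ} (hl : Antitone l)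
    (hb : ∀ j : Fin p, l j ≤ (p - j) * m) :
    StrictMono fun i : Fin (p + 1) => m * (p + 1) + 1 + i - padZero l i := by
  intro i i' hii'
  have := antitone_padZero hl hii'.le
  have := staircase_add_mul_succ (m := m) (Nat.le_of_lt_succ i.isLt)
  have := padZero_le hb i
  have := Fin.lt_def.1 hii'
  dsimp only
  omega

-- The `i`-th up-step of the path of `l`, padded by `l p = 0`, is at position
-- `(m + 1)(p + 1) - (p - i) - l i`.
def staircaseEmb {l : Fin p → ℕ} (hl : Antitone l) (hb : ∀ j : Fin p, l j ≤ (p - j) * m) :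
    Fin (p + 1) ↪o Fin ((m + 1) * (p + 1) + 1) :=
  OrderEmbedding.ofStrictMono
    (fun i => ⟨m * (p + 1) + 1 + i - padZero l i, by
      have := staircase_add_mul_succ (m := m) (le_refl p)
      simp only [Nat.sub_self, zero_mul, zero_add] at this
      omega⟩)
    fun _ _ h => strictMono_sub_padZero hl hb h

@[simp]
theorem val_staircaseEmb {l : Fin p → ℕ} (hl : Antitone l)
    (hb : ∀ j : Fin p, l j ≤ (p - j) * m) (i : Fin (p + 1)) :
    (staircaseEmb hl hb i : ℕ) = m * (p + 1) + 1 + i - padZero l i :=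
  rfl

def staircaseEquiv (m p : ℕ) :
    {l : Fin p → ℕ // Antitone l ∧ ∀ j : Fin p, l j ≤ (p - j) * m} ≃
      {e : Fin (p + 1) ↪o Fin ((m + 1) * (p + 1) + 1) // ∀ i, (m + 1) * (i + 1) ≤ e i} where
  toFun l := ⟨staircaseEmb l.2.1 l.2.2, fun i => by
    have := staircase_add_mul_succ (m := m) (Nat.le_of_lt_succ i.isLt)
    have := padZero_le l.2.2 i
    rw [val_staircaseEmb]
    omega⟩
  invFun e := by
    have he : StrictMono fun i => (e.1 i : ℕ) := fun _ _ h => e.1.strictMono h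
    refine ⟨fun j => m * (p + 1) + 1 + j - e.1 j.castSucc, fun j j' hjj' => ?_, fun j => ?_⟩
    · have := he.add_sub_le (Fin.castSucc_le_castSucc_iff.2 hjj')
      simp only [Fin.val_castSucc] at this
      dsimp only
      omega
    · have := e.2 j.castSucc
      have := staircase_add_mul_succ (m := m) j.isLt.le
      simp only [Fin.val_castSucc] at *
      omega
  left_inv l := by
    refine Subtype.ext (funext fun j => ?_)
    have := l.2.2 j
    have := staircase_add_mul_succ (m := m) j.isLt.le
    simp only [val_staircaseEmb, padZero_castSucc, Fin.val_castSucc]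
    omega
  right_inv e := by
    have he : StrictMono fun i => (e.1 i : ℕ) := fun _ _ h => e.1.strictMono h
    refine Subtype.ext (RelEmbedding.ext fun i => Fin.ext ?_)
    have hlast := e.2 (Fin.last p)
    have := (e.1 (Fin.last p)).isLt
    have hid := staircase_add_mul_succ (m := m) (le_refl p)
    simp only [Fin.val_last, Nat.sub_self, zero_mul, zero_add] at hlast hid
    simp only [val_staircaseEmb, padZero]
    split_ifs with hi
    · have := he.add_sub_le (Fin.le_last i)
      simp only [Fin.val_last] at this
      simp only [Fin.castSucc_mk, Fin.eta]
      omega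
    · have : i = Fin.last p := Fin.ext (by rw [Fin.val_last]; omega)
      subst this
      simp only [Fin.val_last]
      omega

open scoped Classical in
theorem card_staircase_eq (m p : ℕ) :
    Nat.card {l : Fin p → ℕ // Antitone l ∧ ∀ j : Fin p, l j ≤ (p - j) * m} =
      #{s ∈ powersetCard (p + 1) (univ : Finset (Fin ((m + 1) * (p + 1) + 1))) |
        IsDominant (height (m + 1) s) ((m + 1) * (p + 1) + 1) 0} := by
  rw [Nat.card_congr ((staircaseEquiv m p).trans
      ((finsetCardEquivOrderEmb _ _).subtypeEquiv fun _ => Iff.rfl).symm |>.trans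
      (Equiv.subtypeEquivRight fun s => (isDominant_height_iff s.2).symm) |>.trans
      (Equiv.subtypeSubtypeEquivSubtypeInter (fun s => #s = p + 1)
        fun s => IsDominant (height (m + 1) s) _ 0)),
    Nat.card_eq_fintype_card, Fintype.card_subtype, powersetCard_eq_filter, powerset_univ,
    filter_filter]

theorem card_staircase_mul (m p : ℕ) :
    Nat.card {l : Fin p → ℕ // Antitone l ∧ ∀ j : Fin p, l j ≤ (p - j) * m} *
        (m * (p + 1) + 1) =
      ((m + 1) * (p + 1)).choose (p + 1) := by
  have hcycle := card_filter_isDominant_mul (N := (m + 1) * (p + 1) + 1) (c := m + 1) rfl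
  rw [← card_staircase_eq] at hcycle
  have hchoose := Nat.choose_mul_succ_eq ((m + 1) * (p + 1)) (p + 1)
  rw [← hcycle, show (m + 1) * (p + 1) + 1 - (p + 1) = m * (p + 1) + 1 by
    rw [add_one_mul m, add_assoc, add_comm (p + 1), ← add_assoc, Nat.add_sub_cancel]] at hchoose
  refine (Nat.eq_of_mul_eq_mul_right (Nat.succ_pos ((m + 1) * (p + 1))) ?_).symm
  rw [hchoose, mul_right_comm]

end Staircase

end FussCatalan

theorem card_mCatalanPaths_general (n m : ℕ) (hn : 0 < n) :
    (Nat.card {l : Fin (n - 1) → ℕ //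
        Antitone l ∧ ∀ j : Fin (n - 1), l j ≤ (n - 1 - (j : ℕ)) * m} : ℚ)
      = 1 / (m * n + 1) * (Nat.choose ((m + 1) * n) n : ℚ) := by
  obtain ⟨p, rfl⟩ : ∃ p, n = p + 1 := ⟨n - 1, by omega⟩
  have h := FussCatalan.card_staircase_mul m p
  simp only [Nat.add_sub_cancel]
  rw [one_div_mul_eq_div, eq_div_iff (by positivity)]
  exact_mod_cast h

/-- the number of partitions `λ = (λ_1 ≥ ⋯ ≥ λ_{n-1} ≥ 0)` fitting inside
the staircase `((n-1)m, …, 2m, m)` (i.e. `λ_i ≤ (n-i)m`) equals the Fuß-Catalan number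
`(1/(mn+1)) * C((m+1)n, n)`. -/
theorem card_mCatalanPaths (n m : ℕ) (hn : 0 < n) (hm : 0 < m) :
    (Nat.card {l : Fin (n - 1) → ℕ //
        Antitone l ∧ ∀ j : Fin (n - 1), l j ≤ (n - 1 - (j : ℕ)) * m} : ℚ)
      = 1 / (m * n + 1) * (Nat.choose ((m + 1) * n) n : ℚ) :=
  card_mCatalanPaths_general n m hn
end

section
/- The Fuß-Catalan numbers satisfy the recurrence Cat_{n+1}^{(m)} = ∑_{k_1 + ... + k_{m+1} = n} Cat_{k_1}^{(m)} ⋯ Cat_{k_{m+1}}^{(m)} with Cat_0^{(m)} = 1, where the sum ranges over all (m+1)-tuples of nonnegative integers summing to n. -/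
/-! The Raney numbers `R_j(n) = j / ((m+1)n + j) * C((m+1)n + j, n)` are the coefficients of
`B^j`, where `B = ∑ Cat_n^{(m)} xⁿ`; in particular `R_1 = Cat^{(m)}`. Without generating functions,
the Pascal-type rule `R_{j+1}(n+1) = R_j(n+1) + R_{j+m+1}(n)` gives, by induction on `n` and then
on `b`, the Vandermonde-type convolution `R_a * R_b = R_{a+b}`. Hence the `(m+1)`-fold convolution
of `Cat^{(m)}` is `R_{m+1}`, and `R_{m+1}(n) = Cat_{n+1}^{(m)}`. -/

/-- The Fuß-Catalan number `Cat_n^{(m)}`, with `Cat_0^{(m)} = 1`. -/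
def fussCat (m n : ℕ) : ℚ :=
  if n = 0 then 1 else (Nat.choose ((m + 1) * n) n : ℚ) / (m * n + 1)

open Finset

theorem Finset.Nat.sum_antidiagonalTuple_succ {M : Type*} [AddCommMonoid M] (k n : ℕ)
    (f : (Fin (k + 1) → ℕ) → M) :
    ∑ x ∈ Nat.antidiagonalTuple (k + 1) n, f x
      = ∑ p ∈ antidiagonal n, ∑ x ∈ Nat.antidiagonalTuple k p.2, f (Fin.cons p.1 x) := by
  change (((List.Nat.antidiagonalTuple (k + 1) n : List _) : Multiset _).map f).sum =
    (((List.Nat.antidiagonal n : List (ℕ × ℕ)) : Multiset _).map fun p : ℕ × ℕ =>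
      (((List.Nat.antidiagonalTuple k p.2 : List _) : Multiset _).map
        fun x => f (Fin.cons p.1 x)).sum).sum
  simp [List.Nat.antidiagonalTuple, List.flatMap_def, List.sum_flatten, Function.comp_def]

theorem Finset.Nat.sum_antidiagonalTuple_succ_prod {R : Type*} [CommSemiring R] (k n : ℕ)
    (f : ℕ → R) :
    ∑ x ∈ Nat.antidiagonalTuple (k + 1) n, ∏ i, f (x i)
      = ∑ p ∈ antidiagonal n, f p.1 * ∑ x ∈ Nat.antidiagonalTuple k p.2, ∏ i, f (x i) := by
  simp [Nat.sum_antidiagonalTuple_succ, Fin.prod_univ_succ, mul_sum]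

theorem Nat.add_add_one_choose_succ_mul (a b : ℕ) :
    (a + b + 1).choose (a + 1) * (a + 1) = (a + b + 1).choose a * (b + 1) := by
  rw [choose_succ_right_eq, show a + b + 1 - a = b + 1 by omega]

section Raney

variable (m : ℕ)

/-- At `n = j = 0` the formula would give `0 / 0 = 0`, but `R_0` must be the unit of convolution. -/
def raney (n j : ℕ) : ℚ :=
  if n = 0 then 1 else (j : ℚ) / ((m + 1) * n + j) * (Nat.choose ((m + 1) * n + j) n)

@[simp] lemma raney_zero_left (j : ℕ) : raney m 0 j = 1 := if_pos rfl

lemma raney_zero_right {n : ℕ} (hn : n ≠ 0) : raney m n 0 = 0 := by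
  simp [raney, hn]

lemma raney_of_ne_zero (n : ℕ) {j : ℕ} (hj : j ≠ 0) :
    raney m n j = (j : ℚ) / ((m + 1) * n + j) * (Nat.choose ((m + 1) * n + j) n) := by
  rcases eq_or_ne n 0 with rfl | hn
  · simp [raney, hj]
  · exact if_neg hn

lemma raney_succ_succ (n j : ℕ) :
    raney m (n + 1) (j + 1) = raney m (n + 1) j + raney m n (j + (m + 1)) := by
  set N := (m + 1) * (n + 1) + j
  have hN : N = n + (m * n + m + j) + 1 := by ring
  have pascal : ((N + 1).choose (n + 1) : ℚ) * (n + 1) = N.choose n * (N + 1) := by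
    exact_mod_cast (N.add_one_mul_choose_eq n).symm.trans (mul_comm _ _)
  have shift : (N.choose (n + 1) : ℚ) * (n + 1) = N.choose n * (m * n + m + j + 1) := by
    rw [hN]; exact_mod_cast Nat.add_add_one_choose_succ_mul n (m * n + m + j)
  rw [raney_of_ne_zero m _ j.succ_ne_zero, raney_of_ne_zero m _ (by omega : j + (m + 1) ≠ 0),
    raney, if_neg n.succ_ne_zero, show (m + 1) * (n + 1) + (j + 1) = N + 1 by ring,
    show (m + 1) * n + (j + (m + 1)) = N by ring, eq_div_of_mul_eq (by positivity) pascal,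
    eq_div_of_mul_eq (by positivity) shift]
  push_cast [N]
  field_simp
  ring

theorem sum_antidiagonal_raney_mul_raney (n a b : ℕ) :
    ∑ p ∈ antidiagonal n, raney m p.1 a * raney m p.2 b = raney m n (a + b) := by
  induction n generalizing a b with
  | zero => simp
  | succ n ih =>
    induction b with
    | zero => simp [Nat.sum_antidiagonal_succ', raney_zero_right]
    | succ b ihb =>
      calc ∑ p ∈ antidiagonal (n + 1), raney m p.1 a * raney m p.2 (b + 1)
          = raney m (n + 1) a * raney m 0 (b + 1)
              + ∑ p ∈ antidiagonal n, raney m p.1 a * raney m (p.2 + 1) (b + 1) :=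
            Nat.sum_antidiagonal_succ'
        _ = (raney m (n + 1) a * raney m 0 b
              + ∑ p ∈ antidiagonal n, raney m p.1 a * raney m (p.2 + 1) b)
              + ∑ p ∈ antidiagonal n, raney m p.1 a * raney m p.2 (b + (m + 1)) := by
            simp only [raney_succ_succ, raney_zero_left, mul_add, sum_add_distrib]
            ring
        _ = raney m (n + 1) (a + b) + raney m n (a + b + (m + 1)) := by
            rw [← Nat.sum_antidiagonal_succ' (f := fun p => raney m p.1 a * raney m p.2 b), ihb,
              ih, add_assoc]
        _ = raney m (n + 1) (a + (b + 1)) := (raney_succ_succ m n (a + b)).symm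

theorem sum_antidiagonalTuple_prod_raney_one (k n : ℕ) :
    ∑ x ∈ Nat.antidiagonalTuple k n, ∏ i, raney m (x i) 1 = raney m n k := by
  induction k generalizing n with
  | zero =>
    rcases n with _ | n
    · simp
    · rw [Nat.antidiagonalTuple_zero_succ, sum_empty, raney_zero_right m n.succ_ne_zero]
  | succ k ih =>
    rw [Nat.sum_antidiagonalTuple_succ_prod k n fun t => raney m t 1]
    simp only [ih]
    rw [sum_antidiagonal_raney_mul_raney, add_comm]

theorem fussCat_eq_raney_one (n : ℕ) : fussCat m n = raney m n 1 := by
  rcases eq_or_ne n 0 with rfl | hn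
  · simp [fussCat]
  have pascal : (((m + 1) * n + 1 : ℕ) : ℚ) * ((m + 1) * n).choose n
      = ((m + 1) * n + 1).choose (n + 1) * (n + 1) := by
    exact_mod_cast Nat.add_one_mul_choose_eq _ _
  have shift : (((m + 1) * n + 1).choose (n + 1) : ℚ) * (n + 1)
      = ((m + 1) * n + 1).choose n * (m * n + 1) := by
    rw [show (m + 1) * n + 1 = n + m * n + 1 by ring]
    exact_mod_cast Nat.add_add_one_choose_succ_mul n (m * n)
  rw [fussCat, if_neg hn, raney_of_ne_zero m n one_ne_zero]
  push_cast at pascal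
  field_simp
  linear_combination pascal + shift

theorem fussCat_succ_eq_raney (n : ℕ) : fussCat m (n + 1) = raney m n (m + 1) := by
  have shift : (((m + 1) * (n + 1)).choose (n + 1) : ℚ) * (n + 1)
      = ((m + 1) * (n + 1)).choose n * (m * n + m + 1) := by
    rw [show (m + 1) * (n + 1) = n + (m * n + m) + 1 by ring]
    exact_mod_cast Nat.add_add_one_choose_succ_mul n (m * n + m)
  rw [fussCat, if_neg n.succ_ne_zero, raney_of_ne_zero m n m.add_one_ne_zero,
    show (m + 1) * n + (m + 1) = (m + 1) * (n + 1) by ring]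
  push_cast
  field_simp
  linear_combination shift

end Raney

theorem fussCat_recurrence_general (m : ℕ) (n : ℕ) :
    fussCat m (n + 1)
      = ∑ k ∈ Finset.Nat.antidiagonalTuple (m + 1) n, ∏ i, fussCat m (k i) := by
  rw [fussCat_succ_eq_raney]
  simp only [fussCat_eq_raney_one m, sum_antidiagonalTuple_prod_raney_one]

/-- `Cat_{n+1}^{(m)} = ∑_{k_1+⋯+k_{m+1}=n} Cat_{k_1}^{(m)} ⋯ Cat_{k_{m+1}}^{(m)}`,
the sum over all `(m+1)`-tuples of nonnegative integers summing to `n`. -/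
theorem fussCat_recurrence (m : ℕ) (hm : 0 < m) (n : ℕ) :
    fussCat m (n + 1)
      = ∑ k ∈ Finset.Nat.antidiagonalTuple (m + 1) n, ∏ i, fussCat m (k i) :=
  fussCat_recurrence_general m n
end

section
/- The number of type B Catalan paths of length n (lattice paths of 2n steps north or east from (0,0) staying weakly above the diagonal x = y) equals binomial(2n, n). -/
open scoped Classical

/-- Number of north steps among the first `t` steps of the path `w` (`true` = north). -/
def northCount (n : ℕ) (w : Fin (2 * n) → Bool) (t : ℕ) : ℕ :=
  (Finset.univ.filter (fun s : Fin (2 * n) => (s : ℕ) < t ∧ w s = true)).card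

/-- Number of east steps among the first `t` steps of the path `w` (`false` = east). -/
def eastCount (n : ℕ) (w : Fin (2 * n) → Bool) (t : ℕ) : ℕ :=
  (Finset.univ.filter (fun s : Fin (2 * n) => (s : ℕ) < t ∧ w s = false)).card

/-- A type `B` Catalan path of length `n`: a lattice path of `2n` north/east steps starting
at the origin which stays weakly above the diagonal `x = y`, i.e. after each step the
number of east steps taken so far does not exceed the number of north steps. -/
def IsBPath (n : ℕ) (w : Fin (2 * n) → Bool) : Prop :=
  ∀ t : ℕ, t ≤ 2 * n → eastCount n w t ≤ northCount n w t

/-!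
Refine the count by the number `j` of north steps. Deleting the last step shows by induction on
the length `m` that the ballot sequences with `j` north steps number `C(m, j) - C(m, j + 1)`
(for `m ≤ 2j + 1`; there are none for `2j < m`). Summing over `j` telescopes to
`C(m, ⌈m/2⌉) = C(m, ⌊m/2⌋)`.
-/

open Finset

theorem Finset.card_filter_fin_snoc {α : Type*} [Fintype α] {m : ℕ}
    (P : (Fin (m + 1) → α) → Prop) [DecidablePred P] :
    #{w | P w} = ∑ c, #{v : Fin m → α | P (Fin.snoc v c)} := by
  simp only [card_filter]
  rw [← (Fin.snocEquiv fun _ => α).sum_comp, Fintype.sum_prod_type]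
  rfl

section Ballot

variable {m : ℕ}

def prefixCount (w : Fin m → Bool) (b : Bool) (t : ℕ) : ℕ :=
  #{s : Fin m | (s : ℕ) < t ∧ w s = b}

def IsBallot (w : Fin m → Bool) : Prop :=
  ∀ t ≤ m, prefixCount w false t ≤ prefixCount w true t

variable (w : Fin m → Bool) (b c : Bool)

theorem prefixCount_snoc (t : ℕ) :
    prefixCount (Fin.snoc w c : Fin (m + 1) → Bool) b t =
      prefixCount w b t + if m < t ∧ c = b then 1 else 0 := by
  simp only [prefixCount, card_filter, Fin.sum_univ_castSucc, Fin.snoc_castSucc, Fin.snoc_last,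
    Fin.val_castSucc, Fin.val_last]

theorem prefixCount_of_le {t : ℕ} (h : m ≤ t) : prefixCount w b t = prefixCount w b m := by
  unfold prefixCount
  congr 1
  exact filter_congr fun s _ => by simp [s.isLt, s.isLt.trans_le h]

theorem prefixCount_false_add_true : prefixCount w false m + prefixCount w true m = m := by
  simp only [prefixCount, Fin.is_lt, true_and, Bool.eq_false_iff]
  rw [add_comm, card_filter_add_card_filter_not, card_univ, Fintype.card_fin]

theorem prefixCount_snoc_last :
    prefixCount (Fin.snoc w c : Fin (m + 1) → Bool) b (m + 1) =
      prefixCount w b m + if c = b then 1 else 0 := by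
  simp [prefixCount_snoc, prefixCount_of_le w b (Nat.le_succ m)]

theorem isBallot_snoc_iff :
    IsBallot (Fin.snoc w c : Fin (m + 1) → Bool) ↔
      IsBallot w ∧ prefixCount w false m + (if c = false then 1 else 0) ≤
        prefixCount w true m + if c = true then 1 else 0 := by
  rw [← prefixCount_snoc_last, ← prefixCount_snoc_last]
  constructor
  · intro h
    refine ⟨fun t ht => ?_, h (m + 1) le_rfl⟩
    simpa [prefixCount_snoc, Nat.not_lt.2 ht] using h t (by omega)
  · rintro ⟨h, hlast⟩ t ht
    obtain ht | rfl := Nat.lt_or_eq_of_le ht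
    · simpa [prefixCount_snoc, Nat.not_lt.2 (Nat.lt_succ_iff.1 ht)] using h t (by omega)
    · exact hlast

theorem isBallot_snoc_true : IsBallot (Fin.snoc w true : Fin (m + 1) → Bool) ↔ IsBallot w := by
  simp only [isBallot_snoc_iff, Bool.true_eq_false, if_true, if_false, and_iff_left_iff_imp]
  intro h
  exact (h m le_rfl).trans (Nat.le_succ _)

theorem isBallot_snoc_false :
    IsBallot (Fin.snoc w false : Fin (m + 1) → Bool) ↔
      IsBallot w ∧ m < 2 * prefixCount w true m := by
  simp only [isBallot_snoc_iff, Bool.false_eq_true, if_true, if_false]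
  have := prefixCount_false_add_true w
  constructor <;> rintro ⟨h, h'⟩ <;> exact ⟨h, by omega⟩

end Ballot

noncomputable def ballotCount (m j : ℕ) : ℕ :=
  #{w : Fin m → Bool | IsBallot w ∧ prefixCount w true m = j}

theorem ballotCount_eq_zero {m j : ℕ} (h : 2 * j < m) : ballotCount m j = 0 := by
  refine card_eq_zero.2 (filter_eq_empty_iff.2 fun w _ ⟨hw, hj⟩ => ?_)
  have := hw m le_rfl
  have := prefixCount_false_add_true w
  omega

theorem ballotCount_succ_succ (m j : ℕ) :
    ballotCount (m + 1) (j + 1) =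
      ballotCount m j + if m ≤ 2 * j + 1 then ballotCount m (j + 1) else 0 := by
  rw [ballotCount, card_filter_fin_snoc, Fintype.sum_bool]
  simp only [isBallot_snoc_true, isBallot_snoc_false, prefixCount_snoc_last, Bool.false_eq_true,
    if_true, if_false, add_zero, add_left_inj]
  congr 1
  split_ifs with hm
  · exact congrArg card (filter_congr fun v _ =>
      ⟨fun ⟨⟨hv, _⟩, hj⟩ => ⟨hv, hj⟩, fun ⟨hv, hj⟩ => ⟨⟨hv, by omega⟩, hj⟩⟩)
  · exact card_eq_zero.2 (filter_eq_empty_iff.2 fun v _ ⟨⟨_, hv⟩, hj⟩ => by omega)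

theorem ballotCount_zero (j : ℕ) : ballotCount 0 j = Nat.choose 0 j := by
  cases j <;> simp [ballotCount, IsBallot, prefixCount]

/-- `ballotCount m j = C(m, j) - C(m, j + 1)`, stated additively to avoid truncated
subtraction. -/
theorem ballotCount_add_choose_succ {m j : ℕ} (h : m ≤ 2 * j + 1) :
    ballotCount m j + m.choose (j + 1) = m.choose j := by
  induction m generalizing j with
  | zero => rw [ballotCount_zero, Nat.choose_zero_succ, add_zero]
  | succ m ih =>
    obtain _ | j := j
    · rw [ballotCount_eq_zero (by omega), Nat.choose_one_right, Nat.choose_zero_right]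
      omega
    rw [ballotCount_succ_succ, Nat.choose_succ_succ m j, Nat.choose_succ_succ m (j + 1)]
    by_cases hm : m ≤ 2 * j + 1
    · rw [if_pos hm, ← ih hm, ← ih (by omega)]
      ring
    · have hsymm : m.choose (j + 2) = m.choose j := Nat.choose_symm_of_eq_add (by omega)
      rw [if_neg hm, ballotCount_eq_zero (by omega), hsymm]
      ring

theorem sum_ballotCount_Ico {m k : ℕ} (h : m ≤ 2 * k + 1) :
    ∑ j ∈ Ico k (m + 1), ballotCount m j = m.choose k := by
  obtain hk | hk := le_or_gt (m + 1) k
  · rw [Ico_eq_empty_of_le hk, sum_empty, Nat.choose_eq_zero_of_lt (by omega)]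
  · rw [sum_eq_sum_Ico_succ_bot hk, sum_ballotCount_Ico (k := k + 1) (by omega),
      ballotCount_add_choose_succ h]
termination_by m + 1 - k

theorem card_isBallot (m : ℕ) : #{w : Fin m → Bool | IsBallot w} = m.choose (m / 2) := by
  have hmaps : ∀ w ∈ ({w : Fin m → Bool | IsBallot w} : Finset _),
      prefixCount w true m ∈ Ico ((m + 1) / 2) (m + 1) := by
    intro w hw
    have := (mem_filter.1 hw).2 m le_rfl
    have := prefixCount_false_add_true w
    simp only [mem_Ico]
    omega
  rw [card_eq_sum_card_fiberwise hmaps]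
  simp only [filter_filter]
  exact (sum_ballotCount_Ico (by omega)).trans (Nat.choose_symm_of_eq_add (by omega))

/-- the number of type `B` Catalan paths of length `n` equals `C(2n, n)`. -/
theorem card_typeB_paths (n : ℕ) :
    ((Finset.univ : Finset (Fin (2 * n) → Bool)).filter (fun w => IsBPath n w)).card
      = Nat.choose (2 * n) n := by
  have h := card_isBallot (2 * n)
  rwa [Nat.mul_div_cancel_left n two_pos] at h
end

section
/- The set of alternating polynomials for the diagonal action of S_n on C[x_1, y_1, ..., x_n, y_n] is spanned as a complex vector space by the bivariate Vandermonde determinants Δ_G, where G ranges over all n-element subsets of N × N. -/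
/-!
Averaging an alternating polynomial `p` with signs over `S_n` returns `n! • p`, and the
signed average of a monomial `∏ xᵢ^{aᵢ} yᵢ^{bᵢ}` is, by the Leibniz formula, the determinant
`Δ_G` with `G = {(aᵢ, bᵢ)}`; it vanishes unless the `(aᵢ, bᵢ)` are distinct. Since `n!` is
invertible in `ℂ`, every alternating polynomial is a combination of the `Δ_G`.
-/

/-- The bivariate Vandermonde determinant `Δ_G = det(x_i^{α_j} y_i^{β_j})` in
`ℂ[x_1,y_1,…,x_n,y_n]` (variable `(i, true)` is `x_i`, variable `(i, false)` is `y_i`). -/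
noncomputable def vand (n : ℕ) (g : Fin n → ℕ × ℕ) : MvPolynomial (Fin n × Bool) ℂ :=
  Matrix.det (Matrix.of fun i j : Fin n =>
    MvPolynomial.X (i, true) ^ (g j).1 * MvPolynomial.X (i, false) ^ (g j).2)

open MvPolynomial Equiv

namespace MvPolynomial

section Alternating

variable (ι β R : Type*) [Fintype ι] [DecidableEq ι] [CommRing R]

def alternating : Submodule R (MvPolynomial (ι × β) R) where
  carrier := {p | ∀ σ : Perm ι,
    rename (fun v : ι × β => (σ v.1, v.2)) p = ((Perm.sign σ : ℤ) : MvPolynomial (ι × β) R) * p}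
  zero_mem' σ := by simp
  add_mem' hp hq σ := by rw [map_add, hp σ, hq σ, mul_add]
  smul_mem' c p hp σ := by rw [map_smul, hp σ, mul_smul_comm]

noncomputable def antisymmetrize : MvPolynomial (ι × β) R →ₗ[R] MvPolynomial (ι × β) R :=
  ∑ σ : Perm ι, ((Perm.sign σ : ℤ) : R) • (rename fun v : ι × β => (σ v.1, v.2)).toLinearMap

variable {ι β R}

theorem antisymmetrize_apply (p : MvPolynomial (ι × β) R) :
    antisymmetrize ι β R p =
      ∑ σ : Perm ι, ((Perm.sign σ : ℤ) : R) • rename (fun v : ι × β => (σ v.1, v.2)) p := by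
  simp [antisymmetrize]

theorem antisymmetrize_of_mem_alternating {p : MvPolynomial (ι × β) R}
    (hp : p ∈ alternating ι β R) : antisymmetrize ι β R p = Fintype.card (Perm ι) • p := by
  have hσ (σ : Perm ι) :
      ((Perm.sign σ : ℤ) : R) • rename (fun v : ι × β => (σ v.1, v.2)) p = p := by
    rw [hp σ]
    rcases Int.units_eq_one_or (Perm.sign σ) with h | h <;> simp [h]
  rw [antisymmetrize_apply, Finset.sum_congr rfl fun σ _ => hσ σ, Finset.sum_const,
    Finset.card_univ]

end Alternating

section Vandermonde

variable {n : ℕ}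

theorem vand_mem_alternating (g : Fin n → ℕ × ℕ) : vand n g ∈ alternating (Fin n) Bool ℂ := by
  intro σ
  rw [vand, AlgHom.map_det, ← Matrix.det_permute]
  congr 1
  ext i j
  simp [rename_X]

theorem vand_eq_zero_of_not_injective {g : Fin n → ℕ × ℕ} (hg : ¬Function.Injective g) :
    vand n g = 0 := by
  obtain ⟨i, j, hgij, hij⟩ := Function.not_injective_iff.mp hg
  exact Matrix.det_zero_of_column_eq hij fun k => by simp [hgij]

theorem antisymmetrize_monomial (m : Fin n × Bool →₀ ℕ) :
    antisymmetrize (Fin n) Bool ℂ (monomial m 1) = vand n fun i => (m (i, true), m (i, false)) := by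
  have hm : monomial m (1 : ℂ) =
      ∏ i : Fin n, X (i, true) ^ m (i, true) * X (i, false) ^ m (i, false) := by
    rw [monomial_eq, C_1, one_mul, Finsupp.prod_fintype _ _ fun _ => pow_zero _,
      Fintype.prod_prod_type]
    simp only [Fintype.prod_bool]
  rw [antisymmetrize_apply, vand, Matrix.det_apply']
  refine Finset.sum_congr rfl fun σ _ => ?_
  rw [hm, map_prod, smul_eq_C_mul, map_intCast]
  congr 1
  refine Finset.prod_congr rfl fun i _ => ?_
  simp [rename_X]

theorem antisymmetrize_mem_span_vand (p : MvPolynomial (Fin n × Bool) ℂ) :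
    antisymmetrize (Fin n) Bool ℂ p ∈ Submodule.span ℂ {q : MvPolynomial (Fin n × Bool) ℂ |
      ∃ g : Fin n → ℕ × ℕ, Function.Injective g ∧ q = vand n g} := by
  induction p using MvPolynomial.induction_on' with
  | monomial m c =>
    rw [← mul_one c, ← smul_eq_mul, ← smul_monomial, map_smul, antisymmetrize_monomial]
    refine Submodule.smul_mem _ _ ?_
    by_cases hg : Function.Injective fun i => (m (i, true), m (i, false))
    · exact Submodule.subset_span ⟨_, hg, rfl⟩
    · rw [vand_eq_zero_of_not_injective hg]
      exact Submodule.zero_mem _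
  | add p q hp hq => rw [map_add]; exact Submodule.add_mem _ hp hq

end Vandermonde

end MvPolynomial

/-- the alternating polynomials for the diagonal action of `S_n` on
`ℂ[x,y]` are spanned, as a complex vector space, by the bivariate Vandermonde
determinants `Δ_G` for `n`-element subsets `G ⊆ ℕ × ℕ`. -/
theorem span_vand_eq_alternating (n : ℕ) :
    (Submodule.span ℂ {p : MvPolynomial (Fin n × Bool) ℂ |
        ∃ g : Fin n → ℕ × ℕ, Function.Injective g ∧ p = vand n g} : Set (MvPolynomial (Fin n × Bool) ℂ))
      = {p : MvPolynomial (Fin n × Bool) ℂ | ∀ σ : Equiv.Perm (Fin n),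
          MvPolynomial.rename (fun v : Fin n × Bool => (σ v.1, v.2)) p
            = ((Equiv.Perm.sign σ : ℤ) : MvPolynomial (Fin n × Bool) ℂ) * p} := by
  suffices Submodule.span ℂ {p | ∃ g, Function.Injective g ∧ p = vand n g} =
      alternating (Fin n) Bool ℂ from congrArg SetLike.coe this
  refine le_antisymm (Submodule.span_le.2 ?_) fun p hp => ?_
  · rintro _ ⟨g, -, rfl⟩
    exact vand_mem_alternating g
  · have hcard : (Fintype.card (Perm (Fin n)) : ℂ) ≠ 0 := Nat.cast_ne_zero.2 Fintype.card_ne_zero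
    have hp_eq : p = (Fintype.card (Perm (Fin n)) : ℂ)⁻¹ • antisymmetrize (Fin n) Bool ℂ p := by
      rw [antisymmetrize_of_mem_alternating hp, ← Nat.cast_smul_eq_nsmul ℂ, smul_smul,
        inv_mul_cancel₀ hcard, one_smul]
    rw [hp_eq]
    exact Submodule.smul_mem _ _ (antisymmetrize_mem_span_vand p)
end
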